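/- arXiv:quant-ph/9803046 — 2 statements merged into one kernel-verified Lean document; each statement's English description precedes it below -/
import Mathlib

section
/- Generalized retrodictive error relationship: suppose the measurement is retrodictively unbiased and the final pointer observables commute, [μXf, μPf] = 0. Then Δei x · Δei p ≥ ħ/2, i.e. ‖ε_Xi Ψ‖ · ‖ε_Pi Ψ‖ ≥ ħ/2. -/
open scoped ComplexInnerProductSpace

noncomputable section

/-- The commutator of two operators. -/
def commOp {E : Type*} [NormedAddCommGroup E] [InnerProductSpace ℂ E]
    (A B : E →ₗ[ℂ] E) : E →ₗ[ℂ] E := A ∘ₗ B - B ∘ₗ A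

/-- The standard deviation of the observable `A` in the state `Ψ`. -/
def stddev {E : Type*} [NormedAddCommGroup E] [InnerProductSpace ℂ E]
    (A : E →ₗ[ℂ] E) (Ψ : E) : ℝ :=
  Real.sqrt (‖A Ψ‖ ^ 2 - (Complex.re ⟪Ψ, A Ψ⟫) ^ 2)

lemma polar_zero {E : Type*} [NormedAddCommGroup E] [InnerProductSpace ℂ E]
    (S : Submodule ℂ E) (T : E →ₗ[ℂ] E)
    (hT : ∀ χ ∈ S, ⟪χ, T χ⟫ = 0) {χ χ' : E} (hχ : χ ∈ S) (hχ' : χ' ∈ S) :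
    ⟪χ, T χ'⟫ = 0 := by
  have h1 := hT (χ + χ') (S.add_mem hχ hχ')
  have h2 := hT (χ + Complex.I • χ') (S.add_mem hχ (S.smul_mem _ hχ'))
  have ha := hT χ hχ
  have hb := hT χ' hχ'
  simp only [map_add, map_smul, inner_add_left, inner_add_right, inner_smul_left,
    inner_smul_right, ha, hb, Complex.conj_I] at h1 h2
  have h3 : (2 * Complex.I) * ⟪χ, T χ'⟫ = 0 := by
    linear_combination Complex.I * h1 + h2
  simpa [Complex.I_ne_zero] using h3

/-- Generalized retrodictive error relationship: for a retrodictively unbiased measurement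
with commuting final pointer observables, `Δei x · Δei p ≥ ħ/2`. -/
theorem generalized_retrodictive_error_relation
    {E : Type*} [NormedAddCommGroup E] [InnerProductSpace ℂ E]
    (hbar : ℝ) (hhbar : 0 < hbar)
    (xi pi xf pf muXf muPf : E →ₗ[ℂ] E)
    (hxi : xi.IsSymmetric) (hpi : pi.IsSymmetric)
    (hxf : xf.IsSymmetric) (hpf : pf.IsSymmetric)
    (hmuXf : muXf.IsSymmetric) (hmuPf : muPf.IsSymmetric)
    (hccr : commOp xi pi = (Complex.I * (hbar : ℂ)) • (LinearMap.id : E →ₗ[ℂ] E))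
    (S : Submodule ℂ E)
    (hxiS : ∀ χ ∈ S, xi χ ∈ S) (hpiS : ∀ χ ∈ S, pi χ ∈ S)
    (Ψ : E) (hΨS : Ψ ∈ S) (hΨ : ‖Ψ‖ = 1)
    (hretroX : ∀ χ ∈ S, ⟪χ, (muXf - xi) χ⟫ = 0)
    (hretroP : ∀ χ ∈ S, ⟪χ, (muPf - pi) χ⟫ = 0)
    (hpointers : commOp muXf muPf = 0) :
    hbar / 2 ≤ ‖(muXf - xi) Ψ‖ * ‖(muPf - pi) Ψ‖ := by
  have heX : (muXf - xi).IsSymmetric := hmuXf.sub hxi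
  have heP : (muPf - pi).IsSymmetric := hmuPf.sub hpi
  have hccrΨ : xi (pi Ψ) - pi (xi Ψ) = (Complex.I * (hbar : ℂ)) • Ψ := by
    have := congrArg (fun T : E →ₗ[ℂ] E => T Ψ) hccr
    simpa [commOp] using this
  have hcommΨ : muXf (muPf Ψ) = muPf (muXf Ψ) := by
    have := congrArg (fun T : E →ₗ[ℂ] E => T Ψ) hpointers
    simp only [commOp, LinearMap.sub_apply, LinearMap.comp_apply, LinearMap.zero_apply] at this
    exact sub_eq_zero.mp this
  have hA : ⟪xi Ψ, (muPf - pi) Ψ⟫ = 0 := polar_zero S _ hretroP (hxiS Ψ hΨS) hΨS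
  have hB : ⟪(muPf - pi) Ψ, xi Ψ⟫ = 0 :=
    (heP Ψ (xi Ψ)).trans (polar_zero S _ hretroP hΨS (hxiS Ψ hΨS))
  have hC : ⟪(muXf - xi) Ψ, pi Ψ⟫ = 0 :=
    (heX Ψ (pi Ψ)).trans (polar_zero S _ hretroX hΨS (hpiS Ψ hΨS))
  have hD : ⟪pi Ψ, (muXf - xi) Ψ⟫ = 0 := polar_zero S _ hretroX (hpiS Ψ hΨS) hΨS
  have s1 : ⟪muXf Ψ, muPf Ψ⟫ = ⟪muPf Ψ, muXf Ψ⟫ := by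
    rw [hmuXf Ψ (muPf Ψ), hcommΨ, ← hmuPf Ψ (muXf Ψ)]
  have s2 : ⟪xi Ψ, pi Ψ⟫ - ⟪pi Ψ, xi Ψ⟫ = Complex.I * (hbar : ℂ) := by
    rw [hxi Ψ (pi Ψ), hpi Ψ (xi Ψ), ← inner_sub_right, hccrΨ, inner_smul_right]
    simp [inner_self_eq_norm_sq_to_K, hΨ]
  have key : ⟪(muXf - xi) Ψ, (muPf - pi) Ψ⟫ - ⟪(muPf - pi) Ψ, (muXf - xi) Ψ⟫
      = -(Complex.I * (hbar : ℂ)) := by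
    simp only [LinearMap.sub_apply, inner_sub_left, inner_sub_right] at hA hB hC hD ⊢
    linear_combination s1 - hC - hA + hB + hD - s2
  set z : ℂ := ⟪(muXf - xi) Ψ, (muPf - pi) Ψ⟫ with hz
  have hconj : ⟪(muPf - pi) Ψ, (muXf - xi) Ψ⟫ = starRingEnd ℂ z := by
    rw [hz, inner_conj_symm]
  rw [hconj] at key
  have hnorm : ‖z - starRingEnd ℂ z‖ = hbar := by
    rw [key]
    simp [abs_of_pos hhbar]
  have h2z : ‖z - starRingEnd ℂ z‖ ≤ 2 * ‖z‖ := by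
    calc ‖z - starRingEnd ℂ z‖ ≤ ‖z‖ + ‖starRingEnd ℂ z‖ := norm_sub_le _ _
      _ = 2 * ‖z‖ := by rw [RCLike.norm_conj]; ring
  have hcs : ‖z‖ ≤ ‖(muXf - xi) Ψ‖ * ‖(muPf - pi) Ψ‖ := norm_inner_le_norm _ _
  linarith


end
end

section
/- Variance decomposition for the final system observables: suppose the measurement is both retrodictively and predictively unbiased. Then re ⟪Ψ, x_f Ψ⟫ = re ⟪Ψ, x_i Ψ⟫ and re ⟪Ψ, p_f Ψ⟫ = re ⟪Ψ, p_i Ψ⟫, and the variances satisfy (Δ_Ψ x_f)² = (Δ_Ψ x_i)² + (Δd x)² and (Δ_Ψ p_f)² = (Δ_Ψ p_i)² + (Δd p)². -/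
open scoped ComplexInnerProductSpace

noncomputable section


lemma cross_zero {E : Type*} [NormedAddCommGroup E] [InnerProductSpace ℂ E]
    (A : E →ₗ[ℂ] E) (hA : A.IsSymmetric) (S : Submodule ℂ E)
    (h0 : ∀ χ ∈ S, ⟪χ, A χ⟫ = 0) {u v : E} (hu : u ∈ S) (hv : v ∈ S) :
    Complex.re ⟪v, A u⟫ = 0 := by
  have h := h0 (u + v) (S.add_mem hu hv)
  rw [map_add, inner_add_left, inner_add_right, inner_add_right, h0 u hu, h0 v hv] at h
  have hc : ⟪u, A v⟫ = starRingEnd ℂ ⟪v, A u⟫ := by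
    rw [← hA u v, inner_conj_symm]
  rw [hc] at h
  have := congrArg Complex.re h
  simp only [Complex.add_re, Complex.zero_re, add_zero, zero_add, Complex.conj_re] at this
  linarith [this]

lemma stddev_sq' {E : Type*} [NormedAddCommGroup E] [InnerProductSpace ℂ E]
    (A : E →ₗ[ℂ] E) (Ψ : E) (hΨ : ‖Ψ‖ = 1) :
    (Real.sqrt (‖A Ψ‖ ^ 2 - (Complex.re ⟪Ψ, A Ψ⟫) ^ 2)) ^ 2
      = ‖A Ψ‖ ^ 2 - (Complex.re ⟪Ψ, A Ψ⟫) ^ 2 := by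
  apply Real.sq_sqrt
  have h1 : |Complex.re ⟪Ψ, A Ψ⟫| ≤ ‖(⟪Ψ, A Ψ⟫ : ℂ)‖ := Complex.abs_re_le_norm _
  have h2 : ‖(⟪Ψ, A Ψ⟫ : ℂ)‖ ≤ ‖Ψ‖ * ‖A Ψ‖ := norm_inner_le_norm _ _
  rw [hΨ, one_mul] at h2
  nlinarith [abs_nonneg (Complex.re ⟪Ψ, A Ψ⟫), sq_abs (Complex.re ⟪Ψ, A Ψ⟫)]

lemma key_decomp {E : Type*} [NormedAddCommGroup E] [InnerProductSpace ℂ E]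
    (xi xf mu : E →ₗ[ℂ] E)
    (hxi : xi.IsSymmetric) (hxf : xf.IsSymmetric) (hmu : mu.IsSymmetric)
    (S : Submodule ℂ E) (hxiS : ∀ χ ∈ S, xi χ ∈ S)
    (Ψ : E) (hΨS : Ψ ∈ S)
    (hretro : ∀ χ ∈ S, ⟪χ, (mu - xi) χ⟫ = 0)
    (hpred : ∀ χ ∈ S, ⟪χ, (mu - xf) χ⟫ = 0) :
    ⟪Ψ, xf Ψ⟫ = ⟪Ψ, xi Ψ⟫ ∧ ‖xf Ψ‖ ^ 2 = ‖xi Ψ‖ ^ 2 + ‖(xf - xi) Ψ‖ ^ 2 := by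
  have h1 := hretro Ψ hΨS
  have h2 := hpred Ψ hΨS
  simp only [LinearMap.sub_apply, inner_sub_right, sub_eq_zero] at h1 h2
  constructor
  · rw [← h2, h1]
  · have hδ : xf Ψ = xi Ψ + (xf - xi) Ψ := by simp
    rw [hδ, @norm_add_sq ℂ]
    have e1 := cross_zero (mu - xi) (hmu.sub hxi) S hretro hΨS (hxiS Ψ hΨS)
    have e2 := cross_zero (mu - xf) (hmu.sub hxf) S hpred hΨS (hxiS Ψ hΨS)
    have hd : (xf - xi) Ψ = (mu - xi) Ψ - (mu - xf) Ψ := by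
      simp only [LinearMap.sub_apply]; abel
    have : Complex.re ⟪xi Ψ, (xf - xi) Ψ⟫ = 0 := by
      rw [hd, inner_sub_right, Complex.sub_re, e1, e2, sub_zero]
    simp only [RCLike.re_to_complex]
    rw [this]; ring


/-- Variance decomposition for the final system observables of a measurement which is both
retrodictively and predictively unbiased: the final means equal the initial means, and the
final variances are the sums of the initial variances and the squared rms disturbances. -/
theorem final_state_variance_decomposition
    {E : Type*} [NormedAddCommGroup E] [InnerProductSpace ℂ E]
    (hbar : ℝ) (hhbar : 0 < hbar)
    (xi pi xf pf muXf muPf : E →ₗ[ℂ] E)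
    (hxi : xi.IsSymmetric) (hpi : pi.IsSymmetric)
    (hxf : xf.IsSymmetric) (hpf : pf.IsSymmetric)
    (hmuXf : muXf.IsSymmetric) (hmuPf : muPf.IsSymmetric)
    (hccr : commOp xi pi = (Complex.I * (hbar : ℂ)) • (LinearMap.id : E →ₗ[ℂ] E))
    (S : Submodule ℂ E)
    (hxiS : ∀ χ ∈ S, xi χ ∈ S) (hpiS : ∀ χ ∈ S, pi χ ∈ S)
    (Ψ : E) (hΨS : Ψ ∈ S) (hΨ : ‖Ψ‖ = 1)
    (hretroX : ∀ χ ∈ S, ⟪χ, (muXf - xi) χ⟫ = 0)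
    (hretroP : ∀ χ ∈ S, ⟪χ, (muPf - pi) χ⟫ = 0)
    (hpredX : ∀ χ ∈ S, ⟪χ, (muXf - xf) χ⟫ = 0)
    (hpredP : ∀ χ ∈ S, ⟪χ, (muPf - pf) χ⟫ = 0)
    :
    Complex.re ⟪Ψ, xf Ψ⟫ = Complex.re ⟪Ψ, xi Ψ⟫ ∧
    Complex.re ⟪Ψ, pf Ψ⟫ = Complex.re ⟪Ψ, pi Ψ⟫ ∧
    (stddev xf Ψ) ^ 2 = (stddev xi Ψ) ^ 2 + ‖(xf - xi) Ψ‖ ^ 2 ∧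
    (stddev pf Ψ) ^ 2 = (stddev pi Ψ) ^ 2 + ‖(pf - pi) Ψ‖ ^ 2 := by
  obtain ⟨hmX, hnX⟩ := key_decomp xi xf muXf hxi hxf hmuXf S hxiS Ψ hΨS hretroX hpredX
  obtain ⟨hmP, hnP⟩ := key_decomp pi pf muPf hpi hpf hmuPf S hpiS Ψ hΨS hretroP hpredP
  have hrX : Complex.re ⟪Ψ, xf Ψ⟫ = Complex.re ⟪Ψ, xi Ψ⟫ := by rw [hmX]
  have hrP : Complex.re ⟪Ψ, pf Ψ⟫ = Complex.re ⟪Ψ, pi Ψ⟫ := by rw [hmP]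
  refine ⟨hrX, hrP, ?_, ?_⟩
  · rw [stddev, stddev, stddev_sq' xf Ψ hΨ, stddev_sq' xi Ψ hΨ, hnX, hrX]; ring
  · rw [stddev, stddev, stddev_sq' pf Ψ hΨ, stddev_sq' pi Ψ hΨ, hnP, hrP]; ring


end
end
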